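/- arXiv:2212.08161 — 2 statements merged into one kernel-verified Lean document; each statement's English description precedes it below -/
import Mathlib

section
/- Let U, F be natural numbers with U > F > 1, and let M be a real number with F < M ≤ U. Then (1 - 1/U)^((M-1)/(F-1)) < 1 - M/(U·F). -/
/-!
Write `a = 1 - 1/U`. At the exponent `(U-1)/(F-1)` Bernoulli's inequality, applied to
`(1 + 1/(U-1)) ^ p = a⁻¹ ^ p`, gives `a ^ ((U-1)/(F-1)) < 1 - 1/F`. Both sides of the claim are
functions of `t = (M-1)/(F-1)`: the left side `a ^ t` is convex in `t`, the right side is affine in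
`t`, they agree at `t = 1` (`M = F`), and the left side is strictly smaller at `t = (U-1)/(F-1)`
(`M = U`). Convexity then puts the left side strictly below the line on the whole interval.
-/

open Real Set

theorem one_sub_inv_rpow_lt_one_sub_inv {u f : ℝ} (hf : 1 < f) (hfu : f < u) :
    (1 - 1 / u) ^ ((u - 1) / (f - 1)) < 1 - 1 / f := by
  set p := (u - 1) / (f - 1) with hp_def
  have hp : 1 < p := (one_lt_div (by linarith)).2 (by linarith)
  have hbernoulli : 1 + p * (1 / (u - 1)) < (1 + 1 / (u - 1)) ^ p :=
    one_add_mul_self_lt_rpow_one_add (by rw [le_div_iff₀ (by linarith)]; linarith)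
      (one_div_ne_zero (by linarith)) hp
  have hu : 0 < u - 1 := by linarith
  have hu0 : u ≠ 0 := by linarith
  have hf' : 0 < f - 1 := by linarith
  calc (1 - 1 / u) ^ p = ((1 + 1 / (u - 1)) ^ p)⁻¹ := by
        rw [← inv_rpow (by positivity)]
        congr 1
        field_simp
        ring
    _ < (1 + p * (1 / (u - 1)))⁻¹ := inv_strictAnti₀ (by positivity) hbernoulli
    _ = 1 - 1 / f := by
        rw [hp_def]
        field_simp
        ring

theorem ConvexOn.lt_affine_of_le_of_lt {s : Set ℝ} {φ : ℝ → ℝ} (hφ : ConvexOn ℝ s φ)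
    {a b x c d : ℝ} (ha : a ∈ s) (hb : b ∈ s) (hax : a < x) (hxb : x ≤ b)
    (hφa : φ a ≤ c * a + d) (hφb : φ b < c * b + d) : φ x < c * x + d := by
  have hab : 0 < b - a := by linarith
  set w := (x - a) / (b - a) with hw_def
  have hw : 0 < w := div_pos (by linarith) hab
  have hw' : 0 ≤ 1 - w := by
    rw [sub_nonneg, div_le_one hab]
    linarith
  have hx : (1 - w) • a + w • b = x := by
    simp only [smul_eq_mul, hw_def]
    field_simp
    ring
  calc φ x ≤ (1 - w) • φ a + w • φ b := hx ▸ hφ.2 ha hb hw' hw.le (by ring)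
    _ < (1 - w) * (c * a + d) + w * (c * b + d) := by
        simp only [smul_eq_mul]
        linarith [mul_le_mul_of_nonneg_left hφa hw', mul_lt_mul_of_pos_left hφb hw]
    _ = c * x + d := by
        rw [← hx, smul_eq_mul, smul_eq_mul]
        ring

/-- Key inequality of Case (iii). -/
theorem stmt_8 (U F : ℕ) (hUF : U > F) (hF : F > 1) (M : ℝ)
    (hMF : (F : ℝ) < M) (hMU : M ≤ (U : ℝ)) :
    (1 - 1 / (U : ℝ)) ^ ((M - 1) / ((F : ℝ) - 1)) < 1 - M / ((U : ℝ) * (F : ℝ)) := by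
  have hF1 : (1 : ℝ) < F := by exact_mod_cast hF
  have hFU : (F : ℝ) < U := by exact_mod_cast hUF
  have hU : (U : ℝ) ≠ 0 := by linarith
  have hF0 : (F : ℝ) ≠ 0 := by linarith
  have hF1' : (F : ℝ) - 1 ≠ 0 := by linarith
  have hbase : 0 < 1 - 1 / (U : ℝ) := by
    rw [sub_pos, div_lt_one (by linarith)]
    linarith
  have hline : ∀ m : ℝ, 1 - m / (U * F) =
      -((F : ℝ) - 1) / (U * F) * ((m - 1) / ((F : ℝ) - 1)) + (1 - 1 / (U * F)) := fun m => by
    field_simp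
    ring
  rw [hline]
  refine (convexOn_rpow_left hbase).lt_affine_of_le_of_lt (mem_univ 1)
    (mem_univ (((U : ℝ) - 1) / ((F : ℝ) - 1)))
    ?_ ?_ ?_ ?_
  · rwa [lt_div_iff₀ (by linarith), one_mul, sub_lt_sub_iff_right]
  · gcongr
  · rw [rpow_one]
    field_simp
    linarith
  · rw [← hline, div_mul_cancel_left₀ hU, ← one_div]
    exact one_sub_inv_rpow_lt_one_sub_inv hF1 hFU
end

section
/- Let U, M, F be natural numbers with U ≥ M ≥ F > 1 and F dividing M, and let K = M/F. Then 1 - ((U-K)/U)^(F-1) ≤ 1 - ((U-1)/U)^(M-1), i.e., P_perflow ≤ P_random. -/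
/-!
With `x = 1/U` and `F = n + 1` the claim reads `(1 - x) ^ (K F - 1) ≤ (1 - K x) ^ n`, an equality at
`K = 1`. Passing from `K` to `K + 1` multiplies the left side by `(1 - x) ^ F` and, as long as
`(K + 1) F ≤ U`, the right side by at least as much: since `(1 - x)(1 - K x) = 1 - (K + 1) x + K x²`,
Bernoulli's inequality gives `(1 - (K + 1) x) ^ n ≥ (1 - x) ^ (n + 1) (1 - K x) ^ n`.
-/

lemma one_sub_pow_succ_mul_one_sub_mul_pow_le {x : ℝ} {k n : ℕ} (hx : 0 ≤ x)
    (h : (k * (n + 1) + 1) * x ≤ 1) :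
    (1 - x) ^ (n + 1) * (1 - k * x) ^ n ≤ (1 - (k + 1) * x) ^ n := by
  set a := (1 - x) * (1 - k * x)
  have hkx : 0 ≤ (k : ℝ) * x := by positivity
  have hx1 : x ≤ 1 := by nlinarith
  have hkx1 : (k : ℝ) * x ≤ 1 := by nlinarith
  have ha : 0 ≤ a := mul_nonneg (by linarith) (by linarith)
  have hnka : n * k * x ≤ a := by nlinarith
  have hbern := pow_add_mul_le_add_pow (b := -(k * x ^ 2)) ha (by nlinarith) n
  rw [show a + -(k * x ^ 2) = 1 - (k + 1) * x by ring] at hbern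
  refine le_trans ?_ hbern
  rcases n with _ | n
  · simp only [zero_add, pow_one, pow_zero, mul_one, CharP.cast_eq_zero, zero_mul, add_zero]
    linarith
  · have hstep : (1 - x) * a ≤ a - (n + 1) * k * x ^ 2 := by
      push_cast at hnka
      nlinarith [mul_le_mul_of_nonneg_left hnka hx]
    calc (1 - x) ^ (n + 1 + 1) * (1 - k * x) ^ (n + 1) = a ^ n * ((1 - x) * a) := by
          simp only [a, mul_pow]; ring
      _ ≤ a ^ n * (a - (n + 1) * k * x ^ 2) := by gcongr
      _ = _ := by push_cast; ring

lemma one_sub_pow_le_one_sub_mul_pow {x : ℝ} (hx : 0 ≤ x) (k n : ℕ)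
    (h : (k + 1) * (n + 1) * x ≤ 1) :
    (1 - x) ^ (k * (n + 1) + n) ≤ (1 - (k + 1) * x) ^ n := by
  induction k with
  | zero => simp
  | succ k ih =>
    push_cast at h ih ⊢
    have hx1 : 0 ≤ 1 - x := by
      nlinarith [show 0 ≤ ((k : ℝ) + 1 + 1) * n * x + (k + 1) * x by positivity]
    calc (1 - x) ^ ((k + 1) * (n + 1) + n) = (1 - x) ^ (n + 1) * (1 - x) ^ (k * (n + 1) + n) := by
          rw [← pow_add]; ring_nf
      _ ≤ (1 - x) ^ (n + 1) * (1 - (k + 1) * x) ^ n := by gcongr; exact ih (by nlinarith)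
      _ ≤ (1 - (k + 1 + 1) * x) ^ n := by
          exact_mod_cast one_sub_pow_succ_mul_one_sub_mul_pow_le (k := k + 1) hx
            (by push_cast; nlinarith)

/-- Lemma 1: P_perflow ≤ P_random. -/
theorem stmt_9 (U M F : ℕ) (hUM : U ≥ M) (hMF : M ≥ F) (hF : F > 1)
    (hdvd : F ∣ M) (K : ℕ) (hK : K = M / F) :
    1 - (((U : ℝ) - (K : ℝ)) / (U : ℝ)) ^ (F - 1) ≤
      1 - (((U : ℝ) - 1) / (U : ℝ)) ^ (M - 1) := by
  have hKpos : 0 < K := hK ▸ Nat.div_pos hMF (by omega)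
  have hM : M = K * F := by rw [hK, Nat.div_mul_cancel hdvd]
  obtain ⟨n, rfl⟩ : ∃ n, F = n + 1 := ⟨F - 1, by omega⟩
  obtain ⟨k, rfl⟩ : ∃ k, K = k + 1 := ⟨K - 1, by omega⟩
  subst hM
  have hU : (0 : ℝ) < U := by exact_mod_cast (by nlinarith : 0 < U)
  have key := one_sub_pow_le_one_sub_mul_pow (x := 1 / U) (by positivity) k n
    (by rw [mul_one_div, div_le_one hU]; exact_mod_cast hUM)
  rw [show (k + 1) * (n + 1) - 1 = k * (n + 1) + n by rw [Nat.succ_mul]; omega, Nat.add_sub_cancel,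
    sub_div, sub_div, div_self hU.ne', ← mul_one_div (((k + 1 : ℕ) : ℝ))]
  push_cast
  linarith
end
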